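/- arXiv:1911.10754 — 2 statements merged into one kernel-verified Lean document; each statement's English description precedes it below -/
import Mathlib

section
/- Let A be a supersolvable line arrangement in P² over a field K with a modular point p such that |A_p| = m, and let H ∈ A \ A_p. Then |A^H| = m, i.e., exactly m intersection points of A lie on H. -/
/-! Basic setup: the projective plane over a field `K` is modelled by linear
subspaces of `K³ = Fin 3 → K`: projective points are 1-dimensional subspaces
and projective lines are 2-dimensional subspaces; incidence is inclusion. -/

variable (K : Type*) [Field K]

/-- A point of `P²`: a 1-dimensional linear subspace of `K³`. -/
def IsPoint (p : Submodule K (Fin 3 → K)) : Prop :=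
  Module.finrank K p = 1

/-- A line of `P²`: a 2-dimensional linear subspace of `K³`. -/
def IsLine (H : Submodule K (Fin 3 → K)) : Prop :=
  Module.finrank K H = 2

/-- A line arrangement: a finite set of lines in `P²`. -/
def IsArrangement (A : Finset (Submodule K (Fin 3 → K))) : Prop :=
  ∀ H ∈ A, IsLine K H

/-- An arrangement is essential if its lines have no common point. -/
def Essential (A : Finset (Submodule K (Fin 3 → K))) : Prop :=
  ¬ ∃ p : Submodule K (Fin 3 → K), IsPoint K p ∧ ∀ H ∈ A, p ≤ H

/-- The multiplicity of a point `p`: the number of lines of `A` passing through `p`. -/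
noncomputable def mult (A : Finset (Submodule K (Fin 3 → K)))
    (p : Submodule K (Fin 3 → K)) : ℕ :=
  {H ∈ (A : Set (Submodule K (Fin 3 → K))) | p ≤ H}.ncard

/-- An intersection point of `A`: a point lying on at least two lines of `A`. -/
def IsIntersectionPoint (A : Finset (Submodule K (Fin 3 → K)))
    (p : Submodule K (Fin 3 → K)) : Prop :=
  IsPoint K p ∧ 2 ≤ mult K A p

/-- A double point of `A`: a point lying on exactly two lines of `A`. -/
def IsDoublePoint (A : Finset (Submodule K (Fin 3 → K)))
    (p : Submodule K (Fin 3 → K)) : Prop :=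
  IsPoint K p ∧ mult K A p = 2

/-- `n₂(A)`: the number of double points of `A`. -/
noncomputable def n2 (A : Finset (Submodule K (Fin 3 → K))) : ℕ :=
  {p | IsDoublePoint K A p}.ncard

/-- `n₂(H)`: the number of double points of `A` lying on the line `H`. -/
noncomputable def n2on (A : Finset (Submodule K (Fin 3 → K)))
    (H : Submodule K (Fin 3 → K)) : ℕ :=
  {p | IsDoublePoint K A p ∧ p ≤ H}.ncard

/-- `|A^H|`: the number of intersection points of `A` lying on the line `H`. -/
noncomputable def pointsOn (A : Finset (Submodule K (Fin 3 → K)))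
    (H : Submodule K (Fin 3 → K)) : ℕ :=
  {p | IsIntersectionPoint K A p ∧ p ≤ H}.ncard

/-- `p` is a modular point of `A`: an intersection point such that for all distinct
lines `H, L` of `A` not passing through `p`, the point `H ∩ L` lies on some line
of `A` through `p`. -/
def IsModular (A : Finset (Submodule K (Fin 3 → K)))
    (p : Submodule K (Fin 3 → K)) : Prop :=
  IsIntersectionPoint K A p ∧
    ∀ H ∈ A, ∀ L ∈ A, ¬ p ≤ H → ¬ p ≤ L → H ≠ L →
      ∃ K' ∈ A, p ≤ K' ∧ H ⊓ L ≤ K'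

/-- An arrangement is supersolvable if it has a modular point. -/
def Supersolvable (A : Finset (Submodule K (Fin 3 → K))) : Prop :=
  ∃ p, IsModular K A p

/-! The lines of `A` through the modular point `p` cut `H` in pairwise distinct points, and
modularity says that every intersection point `q` of `A` on `H` arises this way: if `q` lies
on `H` and on another line `M ∉ A_p`, then the line of `A_p` through `H ∩ M = q` cuts `H`
in `q`. Hence `L ↦ L ∩ H` is a bijection from `A_p` onto `A^H`. -/

open Module

variable {K}

theorem IsPoint.eq_of_le {p q : Submodule K (Fin 3 → K)} (hp : IsPoint K p) (hq : IsPoint K q)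
    (h : p ≤ q) : p = q :=
  Submodule.eq_of_le_of_finrank_eq h (Eq.trans hp (Eq.symm hq))

theorem IsLine.isPoint_inf {L M : Submodule K (Fin 3 → K)} (hL : IsLine K L) (hM : IsLine K M)
    (hne : L ≠ M) : IsPoint K (L ⊓ M) := by
  have hML : ¬ M ≤ L := fun h =>
    hne (Submodule.eq_of_le_of_finrank_eq h (Eq.trans hM (Eq.symm hL))).symm
  have hlt : finrank K L < finrank K ↑(L ⊔ M) :=
    Submodule.finrank_lt_finrank_of_lt (left_lt_sup.2 hML)
  have hle : finrank K ↑(L ⊔ M) ≤ 3 :=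
    (Submodule.finrank_le _).trans_eq (finrank_fin_fun K)
  have hdim := Submodule.finrank_sup_add_finrank_inf_eq L M
  unfold IsLine at hL hM
  unfold IsPoint
  omega

theorem IsPoint.eq_inf {q L M : Submodule K (Fin 3 → K)} (hq : IsPoint K q) (hL : IsLine K L)
    (hM : IsLine K M) (hne : L ≠ M) (hqL : q ≤ L) (hqM : q ≤ M) : q = L ⊓ M :=
  hq.eq_of_le (hL.isPoint_inf hM hne) (le_inf hqL hqM)

theorem two_le_mult {A : Finset (Submodule K (Fin 3 → K))} {q L M : Submodule K (Fin 3 → K)}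
    (hL : L ∈ A) (hM : M ∈ A) (hne : L ≠ M) (hqL : q ≤ L) (hqM : q ≤ M) :
    2 ≤ mult K A q := by
  rw [mult, ← Set.ncard_pair hne]
  refine Set.ncard_le_ncard ?_ (A.finite_toSet.subset fun _ h => h.1)
  rintro x (rfl | rfl)
  exacts [⟨hL, hqL⟩, ⟨hM, hqM⟩]

theorem exists_ne_of_two_le_mult {A : Finset (Submodule K (Fin 3 → K))}
    {q : Submodule K (Fin 3 → K)} (h : 2 ≤ mult K A q) (H : Submodule K (Fin 3 → K)) :
    ∃ M ∈ A, q ≤ M ∧ M ≠ H := by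
  obtain ⟨M, ⟨hMA, hqM⟩, hMH⟩ := Set.exists_ne_of_one_lt_ncard h H
  exact ⟨M, hMA, hqM, hMH⟩

section

variable {A : Finset (Submodule K (Fin 3 → K))} {p H : Submodule K (Fin 3 → K)}

theorem isIntersectionPoint_inf (hA : IsArrangement K A) {L M : Submodule K (Fin 3 → K)}
    (hL : L ∈ A) (hM : M ∈ A) (hne : L ≠ M) : IsIntersectionPoint K A (L ⊓ M) :=
  ⟨(hA L hL).isPoint_inf (hA M hM) hne, two_le_mult hL hM hne inf_le_left inf_le_right⟩

/-- Two lines through `p` meeting `H` in the same point `q` share both `p` and `q ≠ p`,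
so they coincide. -/
theorem injOn_inf_of_not_le (hA : IsArrangement K A) (hH : H ∈ A) (hHp : ¬ p ≤ H) :
    Set.InjOn (· ⊓ H) {L ∈ (A : Set (Submodule K (Fin 3 → K))) | p ≤ L} := by
  rintro L₁ ⟨hL₁, hpL₁⟩ L₂ ⟨hL₂, hpL₂⟩ (heq : L₁ ⊓ H = L₂ ⊓ H)
  by_contra hne
  have hq : IsPoint K (L₁ ⊓ H) :=
    (hA L₁ hL₁).isPoint_inf (hA H hH) fun h => hHp (h ▸ hpL₁)
  have hqL₂ : L₁ ⊓ H ≤ L₂ := heq ▸ inf_le_left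
  have hq_eq : L₁ ⊓ H = L₁ ⊓ L₂ :=
    hq.eq_inf (hA L₁ hL₁) (hA L₂ hL₂) hne inf_le_left hqL₂
  exact hHp (le_trans (hq_eq ▸ le_inf hpL₁ hpL₂) inf_le_right)

theorem IsModular.exists_inf_eq (hA : IsArrangement K A) (hmod : IsModular K A p) (hH : H ∈ A)
    (hHp : ¬ p ≤ H) {q : Submodule K (Fin 3 → K)} (hq : IsIntersectionPoint K A q)
    (hqH : q ≤ H) : ∃ L ∈ A, p ≤ L ∧ L ⊓ H = q := by
  obtain ⟨M, hMA, hqM, hMH⟩ := exists_ne_of_two_le_mult hq.2 H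
  by_cases hpM : p ≤ M
  · exact ⟨M, hMA, hpM, (hq.1.eq_inf (hA M hMA) (hA H hH) hMH hqM hqH).symm⟩
  · obtain ⟨L, hLA, hpL, hHML⟩ := hmod.2 H hH M hMA hHp hpM hMH.symm
    have hLH : L ≠ H := fun h => hHp (h ▸ hpL)
    have hqL : q ≤ L := (le_inf hqH hqM).trans hHML
    exact ⟨L, hLA, hpL, (hq.1.eq_inf (hA L hLA) (hA H hH) hLH hqL hqH).symm⟩

end

/-- **Lemma.** Let `A` be a supersolvable line arrangement over a field `K` with
a modular point `p` with `|A_p| = m`, and let `H ∈ A \ A_p`.  Then `|A^H| = m`. -/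
theorem pointsOn_eq_of_modular
    (K : Type*) [Field K]
    (A : Finset (Submodule K (Fin 3 → K)))
    (hA : IsArrangement K A)
    (p : Submodule K (Fin 3 → K)) (m : ℕ)
    (hmod : IsModular K A p) (hm : mult K A p = m)
    (H : Submodule K (Fin 3 → K)) (hH : H ∈ A) (hHp : ¬ p ≤ H) :
    pointsOn K A H = m := by
  have himage : {q | IsIntersectionPoint K A q ∧ q ≤ H} =
      (· ⊓ H) '' {L ∈ (A : Set (Submodule K (Fin 3 → K))) | p ≤ L} := by
    ext q
    constructor
    · rintro ⟨hq, hqH⟩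
      obtain ⟨L, hLA, hpL, rfl⟩ := hmod.exists_inf_eq hA hH hHp hq hqH
      exact ⟨L, ⟨hLA, hpL⟩, rfl⟩
    · rintro ⟨L, ⟨hLA, hpL⟩, rfl⟩
      exact ⟨isIntersectionPoint_inf hA hLA hH fun h => hHp (h ▸ hpL), inf_le_right⟩
  rw [pointsOn, himage, (injOn_inf_of_not_le hA hH hHp).ncard_image, ← hm, mult]
end

section
/- Let A be a supersolvable line arrangement in P² over a field K with a modular point p, and write A \ A_p = {H₁, …, H_k} with the H_i distinct. Then n₂(A) ≥ Σ_{i=1}^k n₂(H_i); in particular, no double point of A lies on two distinct lines H_i, H_j ∈ A \ A_p. -/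
/-! Basic setup: the projective plane over a field `K` is modelled by linear
subspaces of `K³ = Fin 3 → K`: projective points are 1-dimensional subspaces
and projective lines are 2-dimensional subspaces; incidence is inclusion. -/

variable (K : Type*) [Field K]

/-! If a double point `q` of `A` lay on two distinct lines `H, L` not through the modular
point `p`, then `q = H ∩ L` would also lie on a line of `A` through `p`, which differs from
`H` and `L`; so `q` would have multiplicity at least three. Hence the sets of double points
on the lines of `A \ A_p` are pairwise disjoint, and their sizes add up to at most `n₂(A)`. -/

open Module

theorem Set.finsum_mem_ncard_le_of_pairwiseDisjoint {ι α : Type*} {s : Set α} (hs : s.Finite)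
    {t : Set ι} (ht : t.Finite) {u : ι → Set α} (hus : ∀ i ∈ t, u i ⊆ s)
    (hu : t.PairwiseDisjoint u) : ∑ᶠ i ∈ t, (u i).ncard ≤ s.ncard := by
  rw [← ht.ncard_biUnion (fun i hi => hs.subset (hus i hi)) hu]
  exact ncard_le_ncard (iUnion₂_subset hus) hs

section LineArrangement

variable {K : Type*} [Field K] {A : Finset (Submodule K (Fin 3 → K))}
  {H L M p q : Submodule K (Fin 3 → K)}

theorem isPoint_inf_of_isLine (hH : IsLine K H) (hL : IsLine K L) (hne : H ≠ L) :
    IsPoint K (H ⊓ L) := by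
  have hsup_le : finrank K ↥(H ⊔ L) ≤ 3 := (Submodule.finrank_le _).trans_eq (by simp)
  have hsup_gt : 2 < finrank K ↥(H ⊔ L) := by
    by_contra! h
    have hH_eq : H = H ⊔ L := Submodule.eq_of_le_of_finrank_le le_sup_left (h.trans hH.ge)
    have hL_eq : L = H ⊔ L := Submodule.eq_of_le_of_finrank_le le_sup_right (h.trans hL.ge)
    exact hne (hH_eq.trans hL_eq.symm)
  have := Submodule.finrank_sup_add_finrank_inf_eq H L
  rw [hH, hL] at this
  unfold IsPoint
  omega

theorem IsDoublePoint.exists_eq_inf (hA : IsArrangement K A) (hq : IsDoublePoint K A q) :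
    ∃ H ∈ (A : Set _), ∃ L ∈ (A : Set _), H ⊓ L = q := by
  obtain ⟨H, L, hne, hHL⟩ := Set.ncard_eq_two.mp hq.2
  have hH : H ∈ {M ∈ (A : Set _) | q ≤ M} := hHL ▸ Set.mem_insert H {L}
  have hL : L ∈ {M ∈ (A : Set _) | q ≤ M} := hHL ▸ Set.mem_insert_of_mem H rfl
  refine ⟨H, hH.1, L, hL.1, ?_⟩
  exact (Submodule.eq_of_le_of_finrank_eq (le_inf hH.2 hL.2)
    (hq.1.trans (isPoint_inf_of_isLine (hA H hH.1) (hA L hL.1) hne).symm)).symm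

theorem finite_setOf_isDoublePoint (hA : IsArrangement K A) :
    {q | IsDoublePoint K A q}.Finite :=
  (A.finite_toSet.image2 (· ⊓ ·) A.finite_toSet).subset fun _ hq => hq.exists_eq_inf hA

theorem three_le_mult (hH : H ∈ A) (hL : L ∈ A) (hM : M ∈ A) (hHL : H ≠ L) (hHM : H ≠ M)
    (hLM : L ≠ M) (hqH : q ≤ H) (hqL : q ≤ L) (hqM : q ≤ M) : 3 ≤ mult K A q := by
  have hsub : ({H, L, M} : Set _) ⊆ {N ∈ (A : Set _) | q ≤ N} := by
    rintro N (rfl | rfl | rfl) <;> exact ⟨by assumption, by assumption⟩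
  have hcard : ({H, L, M} : Set (Submodule K (Fin 3 → K))).ncard = 3 :=
    Set.ncard_eq_three.mpr ⟨H, L, M, hHL, hHM, hLM, rfl⟩
  exact hcard ▸ Set.ncard_le_ncard hsub (A.finite_toSet.subset fun _ hN => hN.1)

theorem IsModular.not_isDoublePoint_of_le_inf (hmod : IsModular K A p) (hH : H ∈ A)
    (hL : L ∈ A) (hpH : ¬p ≤ H) (hpL : ¬p ≤ L) (hne : H ≠ L) (hqH : q ≤ H) (hqL : q ≤ L) :
    ¬IsDoublePoint K A q := by
  obtain ⟨M, hM, hpM, hHLM⟩ := hmod.2 H hH L hL hpH hpL hne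
  have hHM : H ≠ M := fun h => hpH (h ▸ hpM)
  have hLM : L ≠ M := fun h => hpL (h ▸ hpM)
  have hmult := three_le_mult hH hL hM hne hHM hLM hqH hqL ((le_inf hqH hqL).trans hHLM)
  exact fun hq => by rw [hq.2] at hmult; omega

end LineArrangement

/-- **Lemma.** Let `A` be a supersolvable line arrangement over a field `K` with
a modular point `p`.  Then `n₂(A) ≥ Σ_{H ∈ A \ A_p} n₂(H)`; in particular no
double point of `A` lies on two distinct lines of `A \ A_p`. -/
theorem n2_ge_sum_n2on_of_modular
    (K : Type*) [Field K]
    (A : Finset (Submodule K (Fin 3 → K)))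
    (hA : IsArrangement K A)
    (p : Submodule K (Fin 3 → K)) (hmod : IsModular K A p) :
    (∑ᶠ H ∈ {H ∈ (A : Set (Submodule K (Fin 3 → K))) | ¬ p ≤ H}, n2on K A H)
        ≤ n2 K A ∧
    ∀ H ∈ A, ∀ L ∈ A, ¬ p ≤ H → ¬ p ≤ L → H ≠ L →
      ∀ q : Submodule K (Fin 3 → K), IsDoublePoint K A q → ¬ (q ≤ H ∧ q ≤ L) := by
  have hdisj : ∀ H ∈ A, ∀ L ∈ A, ¬ p ≤ H → ¬ p ≤ L → H ≠ L →
      ∀ q : Submodule K (Fin 3 → K), IsDoublePoint K A q → ¬ (q ≤ H ∧ q ≤ L) :=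
    fun H hH L hL hpH hpL hne q hq ⟨hqH, hqL⟩ =>
      hmod.not_isDoublePoint_of_le_inf hH hL hpH hpL hne hqH hqL hq
  refine ⟨?_, hdisj⟩
  refine Set.finsum_mem_ncard_le_of_pairwiseDisjoint (finite_setOf_isDoublePoint hA)
    (A.finite_toSet.subset fun _ hH => hH.1) (fun _ _ _ hq => hq.1) ?_
  rintro H ⟨hH, hpH⟩ L ⟨hL, hpL⟩ hne
  exact Set.disjoint_left.mpr fun q ⟨hq, hqH⟩ ⟨_, hqL⟩ =>
    hdisj H hH L hL hpH hpL hne q hq ⟨hqH, hqL⟩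
end
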